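/- arXiv:2308.08790 — 2 statements merged into one kernel-verified Lean document; each statement's English description precedes it below -/
import Mathlib

section
/- Legitimate user performance bound: define J(μ) = (1−γ̄)(1−μ)·tr W + (γ̄ + (1−γ̄)μ)·tr S, where W and S solve X = q A X Aᵀ + P̄ and X = q A X Aᵀ + Q with q = γ̄ + (1−γ̄)μ, and let P^{OP} solve P^{OP} = A P^{OP} Aᵀ + Q. If P̄ < P^{OP} in the positive definite order, γ̄ < 1 and μ < 1, then J(μ) < tr P^{OP}. -/
/-!
Put `q = γ̄ + (1 − γ̄)μ`, so that `(1 − γ̄)(1 − μ) = 1 − q`. By linearity the gap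
`D = P^{OP} − ((1 − q) W + q S)` solves the Stein equation
`D = q A D Aᵀ + (1 − q)(P^{OP} − P̄)`. Iterating it,
`D = qᵏ Aᵏ D (Aᵏ)ᵀ + Σ_{j<k} qʲ Aʲ (1 − q)(P^{OP} − P̄) (Aʲ)ᵀ`; all summands are positive
semidefinite and the remainder vanishes because `Aᵏ → 0` (Gelfand's formula), so
`tr D ≥ (1 − q) tr (P^{OP} − P̄) > 0`.
-/

open Matrix Filter Topology Finset

open scoped NNReal in
theorem tendsto_pow_atTop_nhds_zero_of_spectralRadius_lt_one {A : Type*} [NormedRing A]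
    [NormedAlgebra ℂ A] [CompleteSpace A] {a : A} (ha : spectralRadius ℂ a < 1) :
    Tendsto (a ^ ·) atTop (𝓝 0) := by
  obtain ⟨r, har, hr1⟩ := ENNReal.lt_iff_exists_nnreal_btwn.mp ha
  have hbound : ∀ᶠ k : ℕ in atTop, ‖a ^ k‖₊ ≤ r ^ k := by
    filter_upwards [(spectrum.pow_nnnorm_pow_one_div_tendsto_nhds_spectralRadius a
      ).eventually_lt_const har, eventually_ge_atTop 1] with k hk hk1
    have hk_pos : (0 : ℝ) < k := by exact_mod_cast hk1
    rw [← ENNReal.coe_rpow_of_nonneg _ (by positivity), ENNReal.coe_lt_coe] at hk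
    have hlt := NNReal.rpow_lt_rpow hk hk_pos
    rw [← NNReal.rpow_mul, one_div, inv_mul_cancel₀ hk_pos.ne', NNReal.rpow_one,
      NNReal.rpow_natCast] at hlt
    exact hlt.le
  refine squeeze_zero_norm' ?_
    (tendsto_pow_atTop_nhds_zero_of_lt_one r.2 (by exact_mod_cast hr1))
  filter_upwards [hbound] with k hk
  exact_mod_cast hk

attribute [local instance] Matrix.linftyOpNormedRing Matrix.linftyOpNormedAlgebra in
theorem Matrix.tendsto_pow_atTop_nhds_zero_of_forall_norm_lt_one {ι : Type*} [Fintype ι]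
    [DecidableEq ι] {A : Matrix ι ι ℝ}
    (hA : ∀ z ∈ spectrum ℂ (A.map (algebraMap ℝ ℂ)), ‖z‖ < 1) :
    Tendsto (A ^ ·) atTop (𝓝 0) := by
  set B := A.map (algebraMap ℝ ℂ) with hB
  have hB_radius : spectralRadius ℂ B < 1 := by
    rcases (spectrum ℂ B).eq_empty_or_nonempty with h | h
    · simp [spectralRadius, h]
    · exact_mod_cast spectrum.spectralRadius_lt_of_forall_lt_of_nonempty h
        (r := 1) fun z hz => by exact_mod_cast hA z hz
  have hB_pow : ∀ k : ℕ, A ^ k = (B ^ k).map Complex.re := by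
    intro k
    rw [hB, ← RingHom.mapMatrix_apply, ← map_pow, RingHom.mapMatrix_apply, Matrix.map_map]
    ext i j
    simp
  have := ((continuous_id.matrix_map Complex.continuous_re).tendsto 0).comp
    (tendsto_pow_atTop_nhds_zero_of_spectralRadius_lt_one hB_radius)
  simpa [Function.comp_def, hB_pow] using this

section Stein

variable {ι : Type*} [Fintype ι] [DecidableEq ι]

theorem Matrix.eq_pow_smul_add_sum_of_eq_smul_mul_mul_transpose_add {R : Type*}
    [CommSemiring R]
    {q : R} {A D E : Matrix ι ι R} (hD : D = q • (A * D * Aᵀ) + E) (k : ℕ) :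
    D = q ^ k • (A ^ k * D * (A ^ k)ᵀ) + ∑ j ∈ range k, q ^ j • (A ^ j * E * (A ^ j)ᵀ) := by
  induction k with
  | zero => simp
  | succ k ih =>
    calc D = q ^ k • (A ^ k * D * (A ^ k)ᵀ) +
          ∑ j ∈ range k, q ^ j • (A ^ j * E * (A ^ j)ᵀ) := ih
      _ = q ^ k • (A ^ k * (q • (A * D * Aᵀ) + E) * (A ^ k)ᵀ) +
          ∑ j ∈ range k, q ^ j • (A ^ j * E * (A ^ j)ᵀ) := by rw [← hD]
      _ = _ := by
        rw [sum_range_succ, transpose_pow, transpose_pow, pow_succ A k, pow_succ' Aᵀ k, pow_succ]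
        simp only [Matrix.mul_add, Matrix.add_mul, Matrix.mul_smul, Matrix.smul_mul,
          Matrix.mul_assoc, smul_add, smul_smul]
        abel

theorem Matrix.trace_le_trace_of_eq_smul_mul_mul_transpose_add {q : ℝ} {A D E : Matrix ι ι ℝ}
    (hA : Tendsto (A ^ ·) atTop (𝓝 0)) (hq₀ : 0 ≤ q) (hq₁ : q ≤ 1) (hE : E.PosSemidef)
    (hD : D = q • (A * D * Aᵀ) + E) : E.trace ≤ D.trace := by
  have hconj : ∀ j : ℕ, (A ^ j * E * (A ^ j)ᵀ).PosSemidef := fun j => by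
    simpa using hE.mul_mul_conjTranspose_same (A ^ j)
  have hlower : ∀ k ≥ 1, E.trace + q ^ k * (A ^ k * D * (A ^ k)ᵀ).trace ≤ D.trace := by
    intro k hk
    have hsum : E.trace ≤ ∑ j ∈ range k, q ^ j * (A ^ j * E * (A ^ j)ᵀ).trace := by
      simpa using single_le_sum (f := fun j => q ^ j * (A ^ j * E * (A ^ j)ᵀ).trace)
        (fun j _ => mul_nonneg (pow_nonneg hq₀ j) (hconj j).trace_nonneg)
        (mem_range.mpr hk)
    conv_rhs => rw [eq_pow_smul_add_sum_of_eq_smul_mul_mul_transpose_add hD k]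
    simp only [trace_add, trace_smul, trace_sum, smul_eq_mul]
    linarith
  have hrem : Tendsto (fun k : ℕ => q ^ k * (A ^ k * D * (A ^ k)ᵀ).trace) atTop (𝓝 0) := by
    have hcont : Continuous fun M : Matrix ι ι ℝ => (M * D * Mᵀ).trace :=
      ((continuous_id.matrix_mul continuous_const).matrix_mul
        continuous_id.matrix_transpose).matrix_trace
    refine isBoundedUnder_le_mul_tendsto_zero ⟨1, eventually_map.mpr (Eventually.of_forall
      fun k => ?_)⟩ (by simpa [Function.comp_def] using (hcont.tendsto 0).comp hA)
    simpa [abs_of_nonneg hq₀] using pow_le_one₀ hq₀ hq₁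
  refine le_of_tendsto (by simpa only [add_zero] using tendsto_const_nhds.add hrem) ?_
  filter_upwards [eventually_ge_atTop 1] using hlower

end Stein

theorem Matrix.sub_combination_eq_smul_mul_mul_transpose_add {ι R : Type*} [Fintype ι]
    [CommRing R]
    {q : R} {A P Q O W S : Matrix ι ι R} (hO : O = A * O * Aᵀ + Q)
    (hW : W = q • (A * W * Aᵀ) + P) (hS : S = q • (A * S * Aᵀ) + Q) :
    O - ((1 - q) • W + q • S) =
      q • (A * (O - ((1 - q) • W + q • S)) * Aᵀ) + (1 - q) • (O - P) := by
  simp only [Matrix.mul_sub, Matrix.sub_mul, Matrix.mul_add, Matrix.add_mul, Matrix.mul_smul,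
    Matrix.smul_mul]
  linear_combination (norm := module) q • hO - (1 - q) • hW - q • hS

theorem legitimate_cost_lt_open_loop_general
    (n : ℕ) (hn : 0 < n) (A Pbar Q POP : Matrix (Fin n) (Fin n) ℝ)
    (hρ : ∀ z ∈ spectrum ℂ (A.map (algebraMap ℝ ℂ)), ‖z‖ < 1)
    (hPdiff : (POP - Pbar).PosDef)
    (hPOP : POP = A * POP * Aᵀ + Q)
    (γ μ : ℝ) (hγ : γ ∈ Set.Ico (0 : ℝ) 1) (hμ : μ ∈ Set.Ico (0 : ℝ) 1)
    (q : ℝ) (hq : q = γ + (1 - γ) * μ)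
    (W S : Matrix (Fin n) (Fin n) ℝ)
    (hW : W = q • (A * W * Aᵀ) + Pbar)
    (hS : S = q • (A * S * Aᵀ) + Q) :
    (1 - γ) * (1 - μ) * W.trace + (γ + (1 - γ) * μ) * S.trace < POP.trace := by
  obtain ⟨hγ₀, hγ₁⟩ := hγ
  obtain ⟨hμ₀, hμ₁⟩ := hμ
  have hq₀ : 0 ≤ q := by nlinarith
  have hq₁ : q < 1 := by nlinarith
  have hgap := trace_le_trace_of_eq_smul_mul_mul_transpose_add
    (tendsto_pow_atTop_nhds_zero_of_forall_norm_lt_one hρ) hq₀ hq₁.le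
    (hPdiff.posSemidef.smul (sub_nonneg.mpr hq₁.le))
    (sub_combination_eq_smul_mul_mul_transpose_add hPOP hW hS)
  have : Nonempty (Fin n) := ⟨⟨0, hn⟩⟩
  have hpos : 0 < (1 - q) * (POP - Pbar).trace := mul_pos (sub_pos.mpr hq₁) hPdiff.trace_pos
  simp only [trace_smul, trace_sub, trace_add, smul_eq_mul] at hgap hpos
  rw [show (1 - γ) * (1 - μ) = 1 - q by rw [hq]; ring, ← hq]
  linarith

/-- Legitimate user performance bound: with
`J(μ) = (1−γ̄)(1−μ) tr W + (γ̄ + (1−γ̄)μ) tr S`, where `W` and `S` solve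
`X = q A X Aᵀ + P̄` and `X = q A X Aᵀ + Q` with `q = γ̄ + (1−γ̄)μ`, and `P^{OP}`
solves `P^{OP} = A P^{OP} Aᵀ + Q`; if `P̄ < P^{OP}` (i.e. `P^{OP} − P̄` is
positive definite), `γ̄ < 1` and `μ < 1`, then `J(μ) < tr P^{OP}`. -/
theorem legitimate_cost_lt_open_loop
    (n : ℕ) (hn : 0 < n) (A Pbar Q POP : Matrix (Fin n) (Fin n) ℝ)
    (hρ : ∀ z ∈ spectrum ℂ (A.map (algebraMap ℝ ℂ)), ‖z‖ < 1)
    (hPbar : Pbar.PosSemidef) (hQ : Q.PosSemidef)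
    (hPdiff : (POP - Pbar).PosDef)
    (hPOP : POP = A * POP * Aᵀ + Q)
    (γ μ : ℝ) (hγ : γ ∈ Set.Ico (0 : ℝ) 1) (hμ : μ ∈ Set.Ico (0 : ℝ) 1)
    (q : ℝ) (hq : q = γ + (1 - γ) * μ)
    (W S : Matrix (Fin n) (Fin n) ℝ)
    (hW : W = q • (A * W * Aᵀ) + Pbar)
    (hS : S = q • (A * S * Aᵀ) + Q) :
    (1 - γ) * (1 - μ) * W.trace + (γ + (1 - γ) * μ) * S.trace < POP.trace :=
  legitimate_cost_lt_open_loop_general n hn A Pbar Q POP hρ hPdiff hPOP γ μ hγ hμ q hq W S hW hS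
end

section
/- Degenerate-channel limits: with q = γ̄ + (1−γ̄)μ, as q → 1⁻ the quantity (1−q)·tr W(q) + q·tr S(q) tends to tr P^{OP}, where W(q), S(q) solve X = q A X Aᵀ + P̄ and X = q A X Aᵀ + Q and P^{OP} solves P^{OP} = A P^{OP} Aᵀ + Q. -/
/-! By Gelfand's formula `‖A ^ j‖` is eventually dominated by a geometric sequence, so the series
`∑ A ^ j X Aᵀ ^ j` converge absolutely and `A ^ N P^{OP} Aᵀ ^ N → 0`; unrolling the Lyapunov
equation `N` times then shows that the partial sums of `∑ tr (A ^ j Q Aᵀ ^ j)` tend to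
`tr P^{OP}`. Abel's limit theorem turns this into `tr S(q) → tr P^{OP}` as `q → 1⁻`, and likewise makes
`tr W(q)` converge to the finite value `∑ tr (A ^ j P̄ Aᵀ ^ j)`, which the factor `1 - q` kills. -/

open Filter Topology Matrix
open scoped NNReal

section BanachAlgebra

variable {𝔸 : Type*} [NormedRing 𝔸] [NormedAlgebra ℂ 𝔸] [CompleteSpace 𝔸]

theorem spectralRadius_lt_one_of_forall_norm_lt_one {a : 𝔸}
    (h : ∀ z ∈ spectrum ℂ a, ‖z‖ < 1) : spectralRadius ℂ a < 1 := by
  rcases (spectrum ℂ a).eq_empty_or_nonempty with he | hne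
  · simp [spectralRadius, he]
  · exact_mod_cast spectrum.spectralRadius_lt_of_forall_lt_of_nonempty hne (r := 1)
      fun z hz => by exact_mod_cast h z hz

theorem eventually_norm_pow_le_of_spectralRadius_lt {a : 𝔸} {r : ℝ≥0}
    (h : spectralRadius ℂ a < r) : ∀ᶠ n in atTop, ‖a ^ n‖ ≤ r ^ n := by
  filter_upwards
    [(spectrum.pow_nnnorm_pow_one_div_tendsto_nhds_spectralRadius a).eventually_lt_const h,
    eventually_gt_atTop 0] with n hn hn0
  rw [one_div, ENNReal.rpow_inv_lt_iff (by positivity), ENNReal.rpow_natCast] at hn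
  exact_mod_cast hn.le

theorem summable_norm_pow_of_spectralRadius_lt_one {a : 𝔸} (h : spectralRadius ℂ a < 1) :
    Summable fun n => ‖a ^ n‖ := by
  obtain ⟨r, hρr, hr1⟩ := ENNReal.lt_iff_exists_nnreal_btwn.mp h
  refine Summable.of_norm_bounded_eventually_nat
    (summable_geometric_of_lt_one r.2 (by exact_mod_cast hr1)) ?_
  simpa using eventually_norm_pow_le_of_spectralRadius_lt hρr

end BanachAlgebra

theorem sum_range_pow_mul_mul_pow_add {R : Type*} [Ring R] {a b x y : R}
    (hx : x = a * x * b + y) (N : ℕ) :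
    ∑ j ∈ Finset.range N, a ^ j * y * b ^ j + a ^ N * x * b ^ N = x := by
  induction N with
  | zero => simp
  | succ N ih =>
    calc ∑ j ∈ Finset.range (N + 1), a ^ j * y * b ^ j + a ^ (N + 1) * x * b ^ (N + 1)
        = ∑ j ∈ Finset.range N, a ^ j * y * b ^ j + a ^ N * (a * x * b + y) * b ^ N := by
          rw [Finset.sum_range_succ, pow_succ a, pow_succ' b]; noncomm_ring
      _ = x := by rw [← hx, ih]

theorem tendsto_sum_range_pow_mul_mul_pow {R : Type*} [Ring R] [TopologicalSpace R]
    [IsTopologicalAddGroup R] {a b x y : R} (hx : x = a * x * b + y)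
    (hrem : Tendsto (fun N => a ^ N * x * b ^ N) atTop (𝓝 0)) :
    Tendsto (fun N => ∑ j ∈ Finset.range N, a ^ j * y * b ^ j) atTop (𝓝 x) := by
  have hsum : (fun N => ∑ j ∈ Finset.range N, a ^ j * y * b ^ j) =
      fun N => x - a ^ N * x * b ^ N :=
    funext fun N => eq_sub_of_add_eq (sum_range_pow_mul_mul_pow_add hx N)
  simpa [hsum] using hrem.const_sub x

theorem Matrix.tendsto_trace_tsum_pow_smul {n : Type*} [Fintype n] {f : ℕ → Matrix n n ℝ}
    {L : Matrix n n ℝ} (hf : ∀ q : ℝ, |q| ≤ 1 → Summable fun j => q ^ j • f j)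
    (hL : Tendsto (fun N => ∑ j ∈ Finset.range N, f j) atTop (𝓝 L)) :
    Tendsto (fun q : ℝ => (∑' j, q ^ j • f j).trace) (𝓝[<] 1) (𝓝 L.trace) := by
  have habel := Real.tendsto_tsum_powerSeries_nhdsWithin_lt (f := fun j => (f j).trace)
    (by simpa [Function.comp_def, trace_sum] using (continuous_id.matrix_trace.tendsto L).comp hL)
  refine habel.congr' ?_
  filter_upwards [Ioo_mem_nhdsLT (show (-1 : ℝ) < 1 by norm_num)] with q hq
  have htrace := ((hf q (abs_le.2 ⟨hq.1.le, hq.2.le⟩)).hasSum.map (traceAddMonoidHom n ℝ)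
    continuous_id.matrix_trace).tsum_eq
  simpa [mul_comm] using htrace

section Frobenius

-- The Frobenius norm is submultiplicative, invariant under transposition, and unchanged by
-- viewing a real matrix as a complex one.
attribute [local instance] Matrix.frobeniusNormedRing Matrix.frobeniusNormedAlgebra

variable {n : Type*} [Fintype n] [DecidableEq n]

theorem Matrix.summable_frobenius_norm_pow {A : Matrix n n ℝ}
    (hA : ∀ z ∈ spectrum ℂ (A.map (algebraMap ℝ ℂ)), ‖z‖ < 1) :
    Summable fun j => ‖A ^ j‖ := by
  refine (summable_norm_pow_of_spectralRadius_lt_one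
    (spectralRadius_lt_one_of_forall_norm_lt_one hA)).congr fun j => ?_
  rw [← Matrix.map_pow, frobenius_norm_map_eq]
  simp

theorem Matrix.summable_pow_smul_mul_mul_transpose_pow {A : Matrix n n ℝ}
    (hA : ∀ z ∈ spectrum ℂ (A.map (algebraMap ℝ ℂ)), ‖z‖ < 1) (P : Matrix n n ℝ) {q : ℝ}
    (hq : |q| ≤ 1) : Summable fun j => q ^ j • (A ^ j * P * Aᵀ ^ j) := by
  have hsum := summable_frobenius_norm_pow hA
  refine (hsum.mul_left ‖P‖).of_norm_bounded_eventually_nat ?_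
  filter_upwards [hsum.tendsto_atTop_zero.eventually_le_const one_pos] with j hj
  calc ‖q ^ j • (A ^ j * P * Aᵀ ^ j)‖ ≤ ‖A ^ j * P * (A ^ j)ᵀ‖ := by
        rw [norm_smul, norm_pow, transpose_pow]
        exact mul_le_of_le_one_left (norm_nonneg _) (pow_le_one₀ (norm_nonneg q) hq)
    _ ≤ ‖A ^ j‖ * ‖P‖ * ‖(A ^ j)ᵀ‖ := norm_mul₃_le
    _ = ‖P‖ * ‖A ^ j‖ * ‖A ^ j‖ := by rw [frobenius_norm_transpose]; ring
    _ ≤ ‖P‖ * ‖A ^ j‖ := mul_le_of_le_one_right (by positivity) hj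

end Frobenius

theorem degenerate_channel_limit_general
    (n : ℕ) (A Pbar Q POP : Matrix (Fin n) (Fin n) ℝ)
    (hρ : ∀ z ∈ spectrum ℂ (A.map (algebraMap ℝ ℂ)), ‖z‖ < 1)
    (hPOP : POP = A * POP * Aᵀ + Q) :
    Filter.Tendsto
      (fun q : ℝ =>
        (1 - q) * (∑' j : ℕ, q ^ j • (A ^ j * Pbar * Aᵀ ^ j)).trace
          + q * (∑' j : ℕ, q ^ j • (A ^ j * Q * Aᵀ ^ j)).trace)
      (nhdsWithin 1 (Set.Iio 1)) (nhds POP.trace) := by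
  have hsummable := summable_pow_smul_mul_mul_transpose_pow hρ
  have hsandwich (P : Matrix (Fin n) (Fin n) ℝ) : Summable fun j => A ^ j * P * Aᵀ ^ j := by
    simpa using hsummable P (q := 1) (by simp)
  have hW := tendsto_trace_tsum_pow_smul (fun _ => hsummable Pbar)
    (hsandwich Pbar).hasSum.tendsto_sum_nat
  have hS := tendsto_trace_tsum_pow_smul (fun _ => hsummable Q)
    (tendsto_sum_range_pow_mul_mul_pow hPOP (hsandwich POP).tendsto_atTop_zero)
  have hq : Tendsto (fun q : ℝ => q) (𝓝[<] 1) (𝓝 1) :=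
    tendsto_nhdsWithin_of_tendsto_nhds tendsto_id
  simpa using (((tendsto_const_nhds (x := (1 : ℝ))).sub hq).mul hW).add (hq.mul hS)

/-- Degenerate-channel limit: as `q → 1⁻`, the quantity
`(1−q) tr W(q) + q tr S(q)` tends to `tr P^{OP}`, where
`W(q) = ∑_j q^j A^j P̄ Aᵀ^j`, `S(q) = ∑_j q^j A^j Q Aᵀ^j` and `P^{OP}` solves
`P^{OP} = A P^{OP} Aᵀ + Q`. -/
theorem degenerate_channel_limit
    (n : ℕ) (A Pbar Q POP : Matrix (Fin n) (Fin n) ℝ)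
    (hρ : ∀ z ∈ spectrum ℂ (A.map (algebraMap ℝ ℂ)), ‖z‖ < 1)
    (hPbar : Pbar.PosSemidef) (hQ : Q.PosSemidef)
    (hPOP : POP = A * POP * Aᵀ + Q) :
    Filter.Tendsto
      (fun q : ℝ =>
        (1 - q) * (∑' j : ℕ, q ^ j • (A ^ j * Pbar * Aᵀ ^ j)).trace
          + q * (∑' j : ℕ, q ^ j • (A ^ j * Q * Aᵀ ^ j)).trace)
      (nhdsWithin 1 (Set.Iio 1)) (nhds POP.trace) :=
  degenerate_channel_limit_general n A Pbar Q POP hρ hPOP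
end
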